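/- Let 1 < α < 2 and N ≥ 2. The N×N symmetric Toeplitz matrix B with entries B_{k,k} = 2ω_1^{(α)}, B_{k,k±1} = ω_0^{(α)} + ω_2^{(α)}, and B_{k,l} = ω_{|k-l|+1}^{(α)} for |k-l| ≥ 2, where ω_j^{(α)} = (-1)^j C(α,j), is negative definite; equivalently, -B is a symmetric positive definite matrix. -/

import Mathlib

/-!
Every Gershgorin disc of the symmetric matrix `-B` lies in the right half-plane. Its diagonal is
`-2ω₁ = 2α`, and on either side of the diagonal a row carries the entries `1 + ω₂, ω₃, ω₄, …`,
which are positive for `1 < α < 2`. By Pascal's rule `ω_j^{(α)} = ω_j^{(α-1)} - ω_{j-1}^{(α-1)}`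
their first `m + 1` terms sum to `α + ω_{m+2}^{(α-1)}`, and this is `< α` because the weights of
order `α - 1 ∈ (0, 1)` are negative from index one on. So each off-diagonal row sum is `< 2α`.
-/

/-- The Grünwald–Letnikov weight `ω_j^{(α)} = (-1)^j C(α, j)` with the
generalized binomial coefficient `C(α, j) = α(α-1)⋯(α-j+1)/j!`. -/
noncomputable def glWeight (α : ℝ) (j : ℕ) : ℝ :=
  (-1) ^ j * ((∏ i ∈ Finset.range j, (α - i)) / (Nat.factorial j))

/-- The `N×N` symmetric Toeplitz matrix `B^α_N` of the discretized fractional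
derivative: diagonal `2ω_1`, first off-diagonals `ω_0 + ω_2`, and entries
`ω_{|k-l|+1}` for `|k-l| ≥ 2`. -/
noncomputable def fracToeplitz (α : ℝ) (N : ℕ) : Matrix (Fin N) (Fin N) ℝ :=
  fun k l =>
    if ((k : ℤ) - (l : ℤ)).natAbs = 0 then 2 * glWeight α 1
    else if ((k : ℤ) - (l : ℤ)).natAbs = 1 then glWeight α 0 + glWeight α 2
    else glWeight α (((k : ℤ) - (l : ℤ)).natAbs + 1)

open Finset
open scoped ComplexOrder

theorem Matrix.IsHermitian.posDef_of_sum_norm_lt_re_diag {𝕜 n : Type*} [RCLike 𝕜] [Fintype n]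
    [DecidableEq n] {A : Matrix n n 𝕜} (hA : A.IsHermitian)
    (h : ∀ k, ∑ j ∈ univ.erase k, ‖A k j‖ < RCLike.re (A k k)) : A.PosDef := by
  rw [hA.posDef_iff_eigenvalues_pos]
  intro i
  have hμ : Module.End.HasEigenvalue (Matrix.toLin' A) (hA.eigenvalues i : 𝕜) := by
    refine Module.End.hasEigenvalue_of_hasEigenvector (x := hA.eigenvectorBasis i) ⟨?_, ?_⟩
    · rw [Module.End.mem_eigenspace_iff, Matrix.toLin'_apply, hA.mulVec_eigenvectorBasis,
        RCLike.real_smul_eq_coe_smul (K := 𝕜)]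
    · exact (WithLp.ofLp_eq_zero 2).ne.2 (hA.eigenvectorBasis.orthonormal.ne_zero i)
  obtain ⟨k, hk⟩ := eigenvalue_mem_ball hμ
  rw [Metric.mem_closedBall, dist_comm, dist_eq_norm] at hk
  have hre : RCLike.re (A k k) - hA.eigenvalues i ≤ ‖A k k - hA.eigenvalues i‖ := by
    simpa using RCLike.re_le_norm (A k k - hA.eigenvalues i)
  linarith [h k]

section GLWeight

variable {α : ℝ}

@[simp]
lemma glWeight_zero : glWeight α 0 = 1 := by simp [glWeight]

@[simp]
lemma glWeight_one : glWeight α 1 = -α := by simp [glWeight]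

lemma glWeight_succ (α : ℝ) (j : ℕ) :
    glWeight α (j + 1) = glWeight α j * ((j - α) / (j + 1)) := by
  simp only [glWeight, prod_range_succ, pow_succ, Nat.factorial_succ]
  push_cast
  field_simp
  ring

lemma glWeight_succ_eq_mul_glWeight_sub_one (α : ℝ) (j : ℕ) :
    glWeight α (j + 1) = -α / (j + 1) * glWeight (α - 1) j := by
  simp only [glWeight, prod_range_succ', pow_succ, Nat.factorial_succ]
  push_cast
  field_simp
  ring_nf

/-- Pascal's rule `C(α, j + 1) = C(α - 1, j + 1) + C(α - 1, j)` in signed form. -/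
lemma glWeight_sub_one_add_glWeight_succ (α : ℝ) (j : ℕ) :
    glWeight (α - 1) j + glWeight α (j + 1) = glWeight (α - 1) (j + 1) := by
  rw [glWeight_succ_eq_mul_glWeight_sub_one, glWeight_succ]
  field_simp
  ring

lemma glWeight_neg (h0 : 0 < α) (h1 : α < 1) {j : ℕ} (hj : 1 ≤ j) : glWeight α j < 0 := by
  induction j, hj using Nat.le_induction with
  | base => simpa using h0
  | succ j hj ih =>
    rw [glWeight_succ]
    have : (1 : ℝ) ≤ j := by exact_mod_cast hj
    exact mul_neg_of_neg_of_pos ih (div_pos (by linarith) (by positivity))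

lemma glWeight_pos (h1 : 1 < α) (h2 : α < 2) {j : ℕ} (hj : 2 ≤ j) : 0 < glWeight α j := by
  obtain ⟨j, rfl⟩ := Nat.exists_eq_add_of_le' hj
  rw [glWeight_succ_eq_mul_glWeight_sub_one]
  exact mul_pos_of_neg_of_neg (div_neg_of_neg_of_pos (by linarith) (by positivity))
    (glWeight_neg (by linarith) (by linarith) (by omega))

end GLWeight

lemma Fin.sum_erase_comp_natAbs_sub {M : Type*} [AddCommMonoid M] {N : ℕ} (f : ℕ → M)
    (k : Fin N) :
    ∑ l ∈ univ.erase k, f ((k : ℤ) - l).natAbs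
      = ∑ d ∈ range k, f (d + 1) + ∑ d ∈ range (N - 1 - k), f (d + 1) := by
  let g : ℕ → M := fun l => if l = k then 0 else f ((k : ℤ) - l).natAbs
  have hg : ∑ l ∈ univ.erase k, f ((k : ℤ) - l).natAbs = ∑ l : Fin N, g l := by
    rw [← sum_erase_add _ _ (mem_univ k)]
    simp only [g, Fin.val_inj, if_pos, add_zero]
    exact sum_congr rfl fun l hl => by rw [if_neg (ne_of_mem_erase hl)]
  have hN : range N = range (k + 1 + (N - 1 - k)) := by congr 1; omega
  rw [hg, Fin.sum_univ_eq_sum_range g, hN, sum_range_add, sum_range_succ, ← sum_range_reflect]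
  simp only [g]
  congr 1
  · rw [if_true, add_zero]
    exact sum_congr rfl fun d hd => by
      rw [mem_range] at hd
      rw [if_neg (by omega)]; congr 1; omega
  · exact sum_congr rfl fun d _ => by rw [if_neg (by omega)]; congr 1; omega

section FracToeplitz

variable {α : ℝ}

noncomputable def fracToeplitzCoeff (α : ℝ) (d : ℕ) : ℝ :=
  if d = 0 then 2 * glWeight α 1
  else if d = 1 then glWeight α 0 + glWeight α 2
  else glWeight α (d + 1)

lemma fracToeplitz_apply (α : ℝ) {N : ℕ} (k l : Fin N) :
    fracToeplitz α N k l = fracToeplitzCoeff α ((k : ℤ) - l).natAbs := rfl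

lemma fracToeplitz_transpose (α : ℝ) (N : ℕ) :
    (fracToeplitz α N).transpose = fracToeplitz α N := by
  ext k l
  rw [Matrix.transpose_apply, fracToeplitz_apply, fracToeplitz_apply, ← Int.natAbs_neg, neg_sub]

@[simp]
lemma fracToeplitzCoeff_zero (α : ℝ) : fracToeplitzCoeff α 0 = -2 * α := by
  simp [fracToeplitzCoeff]

lemma fracToeplitzCoeff_of_two_le (α : ℝ) {d : ℕ} (hd : 2 ≤ d) :
    fracToeplitzCoeff α d = glWeight α (d + 1) := by
  rw [fracToeplitzCoeff, if_neg (by omega), if_neg (by omega)]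

lemma fracToeplitzCoeff_succ_pos (h1 : 1 < α) (h2 : α < 2) (d : ℕ) :
    0 < fracToeplitzCoeff α (d + 1) := by
  rcases d with _ | d
  · simpa [fracToeplitzCoeff] using (glWeight_pos h1 h2 le_rfl).trans (lt_one_add _)
  · rw [fracToeplitzCoeff_of_two_le α (by omega)]
    exact glWeight_pos h1 h2 (by omega)

lemma sum_range_fracToeplitzCoeff_succ (α : ℝ) (m : ℕ) :
    ∑ d ∈ range (m + 1), fracToeplitzCoeff α (d + 1) = α + glWeight (α - 1) (m + 2) := by
  induction m with
  | zero =>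
    simp only [zero_add, sum_range_one, fracToeplitzCoeff, one_ne_zero, if_false, if_true]
    rw [← glWeight_sub_one_add_glWeight_succ, ← glWeight_sub_one_add_glWeight_succ]
    simp only [glWeight_zero, glWeight_one, zero_add]
    ring
  | succ m ih =>
    have hpascal := glWeight_sub_one_add_glWeight_succ α (m + 2)
    rw [sum_range_succ, ih, fracToeplitzCoeff_of_two_le α (by omega)]
    linarith

lemma sum_range_fracToeplitzCoeff_succ_lt (h1 : 1 < α) (h2 : α < 2) (m : ℕ) :
    ∑ d ∈ range m, fracToeplitzCoeff α (d + 1) < α := by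
  rcases m with _ | m
  · rw [sum_range_zero]
    linarith
  · rw [sum_range_fracToeplitzCoeff_succ]
    linarith [glWeight_neg (α := α - 1) (by linarith) (by linarith) (by omega : 1 ≤ m + 2)]

end FracToeplitz

theorem fracToeplitz_neg_posDef_general (α : ℝ) (hα1 : 1 < α) (hα2 : α < 2)
    (N : ℕ) :
    (-(fracToeplitz α N)).PosDef := by
  have hherm : (-(fracToeplitz α N)).IsHermitian := by
    rw [Matrix.IsHermitian, Matrix.conjTranspose_eq_transpose_of_trivial, Matrix.transpose_neg,
      fracToeplitz_transpose]
  refine hherm.posDef_of_sum_norm_lt_re_diag fun k => ?_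
  have hrow : ∑ l ∈ univ.erase k, ‖(-fracToeplitz α N) k l‖
      = ∑ d ∈ range k, fracToeplitzCoeff α (d + 1)
        + ∑ d ∈ range (N - 1 - k), fracToeplitzCoeff α (d + 1) := by
    simp only [Matrix.neg_apply, norm_neg, fracToeplitz_apply]
    rw [Fin.sum_erase_comp_natAbs_sub (‖fracToeplitzCoeff α ·‖)]
    simp only [Real.norm_eq_abs, abs_of_pos (fracToeplitzCoeff_succ_pos hα1 hα2 _)]
  rw [hrow, Matrix.neg_apply, fracToeplitz_apply, sub_self, Int.natAbs_zero,
    fracToeplitzCoeff_zero, RCLike.re_to_real]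
  linarith [sum_range_fracToeplitzCoeff_succ_lt hα1 hα2 k,
    sum_range_fracToeplitzCoeff_succ_lt hα1 hα2 (N - 1 - k)]

/-- For `1 < α < 2` and `N ≥ 2` the Toeplitz matrix `B^α_N` is
negative definite, i.e. `-B^α_N` is symmetric positive definite. -/
theorem fracToeplitz_neg_posDef (α : ℝ) (hα1 : 1 < α) (hα2 : α < 2)
    (N : ℕ) (hN : 2 ≤ N) :
    (-(fracToeplitz α N)).PosDef :=
  fracToeplitz_neg_posDef_general α hα1 hα2 N
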